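/- Let n ≥ 3 be an integer and define the integer sequence a_1 = n-1, a_2 = n(n-2), a_{i+2} = (2n-1)a_{i+1} - (n^2-n+1)a_i. Then a_n divides n^n (equivalently a_n = 1) if and only if n = 3. -/
import Mathlib

private def rr6 : ℕ → ℤ := fun i =>
  if i % 6 = 0 then 1 else if i % 6 = 1 then 0 else if i % 6 = 2 then -1
  else if i % 6 = 3 then -1 else if i % 6 = 4 then 0 else 1

private lemma rr6_step (i : ℕ) : rr6 (i + 2) = rr6 (i + 1) - rr6 i := by
  have h : i % 6 = 0 ∨ i % 6 = 1 ∨ i % 6 = 2 ∨ i % 6 = 3 ∨ i % 6 = 4 ∨ i % 6 = 5 := by omega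
  rcases h with h|h|h|h|h|h <;>
    · have e1 : (i + 1) % 6 = (i % 6 + 1) % 6 := by omega
      have e2 : (i + 2) % 6 = (i % 6 + 2) % 6 := by omega
      simp [rr6, e1, e2, h]

private lemma aux_mod6 (N : ℤ) (a : ℕ → ℤ)
    (h1 : a 1 = N - 1) (h2 : a 2 = N * (N - 2))
    (hrec : ∀ i : ℕ, 1 ≤ i →
      a (i + 2) = (2 * N - 1) * a (i + 1) - (N ^ 2 - N + 1) * a i) :
    ∀ i : ℕ, 1 ≤ i → (N - 1) ∣ (a i - rr6 i) ∧ (N - 1) ∣ (a (i + 1) - rr6 (i + 1)) := by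
  intro i hi
  induction i, hi using Nat.le_induction with
  | base =>
    constructor
    · exact ⟨1, by simp [h1, rr6]⟩
    · exact ⟨N - 1, by simp [h2, rr6]; ring⟩
  | succ i hi ih =>
    obtain ⟨⟨c1, hc1⟩, ⟨c2, hc2⟩⟩ := ih
    refine ⟨⟨c2, hc2⟩, ⟨c2 - c1 + 2 * a (i + 1) - N * a i, ?_⟩⟩
    rw [hrec i hi, rr6_step i]
    linear_combination hc2 - hc1

private lemma aux_key (N : ℤ) (a : ℕ → ℤ)
    (h1 : a 1 = N - 1) (h2 : a 2 = N * (N - 2))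
    (hrec : ∀ i : ℕ, 1 ≤ i →
      a (i + 2) = (2 * N - 1) * a (i + 1) - (N ^ 2 - N + 1) * a i) :
    ∀ k : ℕ, ∃ x y z T : ℤ, 2 * T = (3 * (k : ℤ) + 2) * (3 * (k : ℤ) + 1) ∧
      a (3 * k + 1) = (3 * (k : ℤ) + 1) * N - 1 + N ^ 3 * x ∧
      a (3 * k + 2) = T * N ^ 2 - (3 * (k : ℤ) + 2) * N + N ^ 3 * y ∧
      a (3 * k + 3) = 1 - (T + (3 * (k : ℤ) + 2)) * N ^ 2 + N ^ 3 * z := by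
  intro k
  induction k with
  | zero =>
    refine ⟨0, 0, 1, 1, by norm_num, ?_, ?_, ?_⟩
    · norm_num [h1]
    · norm_num [h2]; ring
    · have e : a 3 = (2 * N - 1) * a 2 - (N ^ 2 - N + 1) * a 1 := hrec 1 le_rfl
      rw [show (3 : ℕ) * 0 + 3 = 3 from rfl, e, h1, h2]; push_cast; ring
  | succ k ih =>
    obtain ⟨x, y, z, T, hT, H1, H2, H3⟩ := ih
    set K : ℤ := (k : ℤ) with hK
    -- a (3k+4)
    have hA4 : a (3 * k + 4) = (3 * K + 4) * N - 1 +
        N ^ 3 * (-2 - z - y - T - 3 * K + 2 * N * z + N * y - N * T - N ^ 2 * y) := by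
      have e : a (3 * k + 2 + 2) =
          (2 * N - 1) * a (3 * k + 2 + 1) - (N ^ 2 - N + 1) * a (3 * k + 2) :=
        hrec (3 * k + 2) (by omega)
      rw [show 3 * k + 4 = 3 * k + 2 + 2 from by omega, e,
        show 3 * k + 2 + 1 = 3 * k + 3 from by omega, H3, H2]
      ring
    -- a (3k+5)
    have hA5 : a (3 * k + 5) = (T + 9 * K + 9) * N ^ 2 - (3 * K + 5) * N +
        N ^ 3 * (y - 2 * N - 3 * N * z - 3 * N * y - 3 * N * K + 3 * N ^ 2 * z +
          3 * N ^ 2 * y - 2 * N ^ 2 * T - 2 * N ^ 3 * y) := by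
      have e : a (3 * k + 3 + 2) =
          (2 * N - 1) * a (3 * k + 3 + 1) - (N ^ 2 - N + 1) * a (3 * k + 3) :=
        hrec (3 * k + 3) (by omega)
      rw [show 3 * k + 5 = 3 * k + 3 + 2 from by omega, e,
        show 3 * k + 3 + 1 = 3 * k + 4 from by omega, hA4, H3]
      ring
    -- a (3k+6)
    have hA6 : a (3 * k + 6) = 1 - ((T + 9 * K + 9) + (3 * K + 5)) * N ^ 2 +
        N ^ 3 * (16 + z + 3 * T + 18 * K + 3 * N * y - 2 * N ^ 2 - 6 * N ^ 2 * z -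
          6 * N ^ 2 * y + 2 * N ^ 2 * T - 3 * N ^ 2 * K + 4 * N ^ 3 * z + 6 * N ^ 3 * y -
          3 * N ^ 3 * T - 3 * N ^ 4 * y) := by
      have e : a (3 * k + 4 + 2) =
          (2 * N - 1) * a (3 * k + 4 + 1) - (N ^ 2 - N + 1) * a (3 * k + 4) :=
        hrec (3 * k + 4) (by omega)
      rw [show 3 * k + 6 = 3 * k + 4 + 2 from by omega, e,
        show 3 * k + 4 + 1 = 3 * k + 5 from by omega, hA5, hA4]
      ring
    refine ⟨-2 - z - y - T - 3 * K + 2 * N * z + N * y - N * T - N ^ 2 * y,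
      y - 2 * N - 3 * N * z - 3 * N * y - 3 * N * K + 3 * N ^ 2 * z +
        3 * N ^ 2 * y - 2 * N ^ 2 * T - 2 * N ^ 3 * y,
      16 + z + 3 * T + 18 * K + 3 * N * y - 2 * N ^ 2 - 6 * N ^ 2 * z -
        6 * N ^ 2 * y + 2 * N ^ 2 * T - 3 * N ^ 2 * K + 4 * N ^ 3 * z + 6 * N ^ 3 * y -
        3 * N ^ 3 * T - 3 * N ^ 4 * y,
      T + 9 * K + 9, ?_, ?_, ?_, ?_⟩
    · push_cast; linear_combination hT
    · rw [show 3 * (k + 1) + 1 = 3 * k + 4 from by omega, hA4]; push_cast; ring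
    · rw [show 3 * (k + 1) + 2 = 3 * k + 5 from by omega, hA5]; push_cast; ring
    · rw [show 3 * (k + 1) + 3 = 3 * k + 6 from by omega, hA6]; push_cast; ring

theorem stmtX (n : ℕ) (hn : 3 ≤ n) (a : ℕ → ℤ)
    (h1 : a 1 = n - 1) (h2 : a 2 = n * (n - 2))
    (hrec : ∀ i : ℕ, 1 ≤ i →
      a (i + 2) = (2 * n - 1) * a (i + 1) - (n ^ 2 - n + 1) * a i) :
    ((a n ∣ (n : ℤ) ^ n) ↔ n = 3) ∧ ((a n = 1) ↔ n = 3) := by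
  set N : ℤ := (n : ℤ) with hNdef
  by_cases hn3 : n = 3
  · subst hn3
    have ha3 : a 3 = 1 := by
      have e := hrec 1 le_rfl
      rw [h1, h2] at e
      rw [e]; norm_num
    constructor
    · simp [ha3]
    · simp [ha3]
  · -- n ≥ 4 : show ¬ (a n ∣ N ^ n)
    have hn4 : 4 ≤ n := by omega
    have hN4 : (4 : ℤ) ≤ N := by rw [hNdef]; exact_mod_cast hn4
    have hN0 : N ≠ 0 := by positivity
    have hnd : ¬ (a n ∣ N ^ n) := by
      intro hdvd
      have h3cases : n % 3 = 0 ∨ n % 3 = 1 ∨ n % 3 = 2 := by omega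
      rcases h3cases with hm | hm | hm
      · -- n ≡ 0 mod 3
        obtain ⟨k, hk⟩ : ∃ k, n = 3 * k + 3 := ⟨n / 3 - 1, by omega⟩
        obtain ⟨x, y, z, T, hT, _, _, H3⟩ := aux_key N a h1 h2 hrec k
        have hNk : 3 * (k : ℤ) + 3 = N := by rw [hNdef, hk]; push_cast; ring
        have han : a n = 1 - (T + (3 * (k : ℤ) + 2)) * N ^ 2 + N ^ 3 * z := by
          rw [hk]; exact H3
        set S : ℤ := T + (3 * (k : ℤ) + 2) with hSdef
        have hS : 2 * S = N * (N - 1) := by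
          rw [hSdef]; linear_combination hT + (3 * (k : ℤ) + 2 + N) * hNk
        have hcop : IsCoprime (a n) N := ⟨1, N * (S - N * z), by rw [han]; ring⟩
        have hone : a n ∣ 1 := by
          obtain ⟨u, v, huv⟩ := hcop.pow_right (n := n)
          exact huv ▸ dvd_add (Dvd.dvd.mul_left dvd_rfl u) (hdvd.mul_left v)
        rcases Int.isUnit_iff.mp (isUnit_of_dvd_one hone) with h | h
        · -- a n = 1
          have e : (1 : ℤ) - S * N ^ 2 + N ^ 3 * z = 1 := by rw [← han, h]
          have e2 : N ^ 2 * (S - N * z) = 0 := by linear_combination -e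
          have e3 : S = N * z := by
            rcases mul_eq_zero.mp e2 with h' | h'
            · exact absurd h' (pow_ne_zero 2 hN0)
            · linarith
          have e4 : 2 * z = N - 1 := by
            have : N * (2 * z - (N - 1)) = 0 := by
              rw [e3] at hS; linear_combination hS
            rcases mul_eq_zero.mp this with h' | h'
            · exact absurd h' hN0
            · linarith
          -- N is odd, so n % 6 = 3
          have hodd : n % 2 = 1 := by
            rcases Nat.even_or_odd n with he | ho
            · obtain ⟨m, hmm⟩ := he
              rw [hNdef, hmm] at e4
              push_cast at e4
              omega
            · omega
          have hn6 : n % 6 = 3 := by omega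
          have hd6 := (aux_mod6 N a h1 h2 hrec n (by omega)).1
          have hrrn : rr6 n = -1 := by simp [rr6, hn6]
          rw [hrrn, h] at hd6
          have : N - 1 ≤ 2 := Int.le_of_dvd (by norm_num) (by simpa using hd6)
          linarith
        · -- a n = -1
          have e : (1 : ℤ) - S * N ^ 2 + N ^ 3 * z = -1 := by rw [← han, h]
          have e2 : N ^ 2 ∣ 2 := ⟨S - N * z, by linear_combination e⟩
          have : N ^ 2 ≤ 2 := Int.le_of_dvd (by norm_num) e2
          nlinarith
      · -- n ≡ 1 mod 3
        obtain ⟨k, hk⟩ : ∃ k, n = 3 * k + 1 := ⟨n / 3, by omega⟩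
        obtain ⟨x, y, z, T, hT, H1, _, _⟩ := aux_key N a h1 h2 hrec k
        have hNk : 3 * (k : ℤ) + 1 = N := by rw [hNdef, hk]; push_cast; ring
        have han : a n = N * N - 1 + N ^ 3 * x := by
          rw [hk, H1, hNk]
        have hcop : IsCoprime (a n) N := ⟨-1, N + N ^ 2 * x, by rw [han]; ring⟩
        have hone : a n ∣ 1 := by
          obtain ⟨u, v, huv⟩ := hcop.pow_right (n := n)
          exact huv ▸ dvd_add (Dvd.dvd.mul_left dvd_rfl u) (hdvd.mul_left v)
        rcases Int.isUnit_iff.mp (isUnit_of_dvd_one hone) with h | h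
        · -- a n = 1
          have e : N * N - 1 + N ^ 3 * x = 1 := by rw [← han, h]
          have e2 : N ^ 2 ∣ 2 := ⟨1 + N * x, by linear_combination -e⟩
          have : N ^ 2 ≤ 2 := Int.le_of_dvd (by norm_num) e2
          nlinarith
        · -- a n = -1
          have e : N * N - 1 + N ^ 3 * x = -1 := by rw [← han, h]
          have e2 : N ^ 2 * (1 + N * x) = 0 := by linear_combination e
          have e3 : 1 + N * x = 0 := by
            rcases mul_eq_zero.mp e2 with h' | h'
            · exact absurd h' (pow_ne_zero 2 hN0)
            · exact h'
          have e4 : N ∣ 1 := ⟨-x, by linarith⟩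
          have : N ≤ 1 := Int.le_of_dvd (by norm_num) e4
          linarith
      · -- n ≡ 2 mod 3 : 3 ∣ a n but 3 ∤ n
        obtain ⟨t, ht⟩ : ∃ t, n = 3 * t + 2 := ⟨n / 3, by omega⟩
        have d1 : (3 : ℤ) ∣ 2 * N - 1 := by
          refine ⟨2 * (t : ℤ) + 1, ?_⟩
          rw [hNdef, ht]; push_cast; ring
        have d2 : (3 : ℤ) ∣ N ^ 2 - N + 1 := by
          refine ⟨3 * (t : ℤ) ^ 2 + 3 * (t : ℤ) + 1, ?_⟩
          rw [hNdef, ht]; push_cast; ring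
        have e : a n = (2 * N - 1) * a (n - 1) - (N ^ 2 - N + 1) * a (n - 2) := by
          have e0 := hrec (n - 2) (by omega)
          rw [show n - 2 + 2 = n from by omega, show n - 2 + 1 = n - 1 from by omega] at e0
          exact e0
        have h3a : (3 : ℤ) ∣ a n := by
          rw [e]
          exact dvd_sub (d1.mul_right _) (d2.mul_right _)
        have h3N : (3 : ℤ) ∣ N := Int.prime_three.dvd_of_dvd_pow (h3a.trans hdvd)
        have h3n : (3 : ℕ) ∣ n := by rw [hNdef] at h3N; exact_mod_cast h3N
        omega
    constructor
    · exact ⟨fun h => absurd h hnd, fun h => absurd h hn3⟩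
    · exact ⟨fun h => absurd (h ▸ one_dvd (N ^ n)) hnd, fun h => absurd h hn3⟩
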